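/- arXiv:2505.10800 — 2 statements merged into one kernel-verified Lean document; each statement's English description precedes it below -/
import Mathlib

section
/- Let λ > 0, δ ∈ (0, 2λ/L_f), μ = 2/(2λ + L_f), τ = L_f²δ²/(8λ). Let x', x ∈ ℝⁿ, η ∈ ∂h(x), and suppose x⁺ = Prox_{μg}((1 − μλ)y − μ∇f(y) + μλx + μη) for some y ∈ ℝⁿ with ‖x⁺ − y‖ ≤ δ‖x' − x‖. Then (λ/2)‖x − x⁺‖² ≤ F(x) − F(x⁺) + τ‖x' − x‖² (an inequality in the extended reals; F(x⁺) is finite because x⁺ lies in the domain of g). -/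
/-! Optimality of the proximal step makes `(v - x⁺)/μ` a subgradient of `g` at `x⁺`, where `v` is
the prox argument; since `1/μ = λ + L_f/2`, this vector is
`λ (x - x⁺) + (L_f/2) (y - x⁺) - ∇f(y) + η`. Test it at `x`, add the subgradient inequality of `h`
at `x`, and bound `f` by
`f(x⁺) ≤ f(x) + ⟪∇f(y), x⁺ - x⟫ + (λ/2) ‖(x⁺ - x) + (L_f/(2λ)) (x⁺ - y)‖²`,
which follows from convexity of `f` at `x⁺` and cocoercivity of `∇f` (Baillon–Haddad). All linear
terms cancel and `(λ/2) ‖x - x⁺‖² - (L_f²/(8λ)) ‖x⁺ - y‖²` remains; finally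
`‖x⁺ - y‖ ≤ δ ‖x' - x‖`. -/

open Set Filter Topology
open scoped InnerProductSpace

noncomputable section

abbrev Euc (n : ℕ) := EuclideanSpace ℝ (Fin n)

/-- The subdifferential of a real-valued function `h` at `u`. -/
def SubdiffR {n : ℕ} (h : Euc n → ℝ) (u : Euc n) : Set (Euc n) :=
  {ξ | ∀ z, h u + ⟪ξ, z - u⟫_ℝ ≤ h z}

/-- Convexity for extended-real-valued functions. -/
def ConvexEReal {n : ℕ} (g : Euc n → EReal) : Prop :=
  ∀ x y : Euc n, ∀ a b : ℝ, 0 ≤ a → 0 ≤ b → a + b = 1 →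
    g (a • x + b • y) ≤ (a : EReal) * g x + (b : EReal) * g y

/-- `g` is proper: nowhere `⊥` and somewhere finite. -/
def ProperE {n : ℕ} (g : Euc n → EReal) : Prop :=
  (∀ x, g x ≠ ⊥) ∧ ∃ x, g x ≠ ⊤

/-- `P` is the proximal mapping of `g`: for every `α > 0` and every `x`, `P α x` is
the unique minimizer over `ℝⁿ` of `y ↦ g y + (1/(2α)) ‖x - y‖²`. -/
def IsProx {n : ℕ} (g : Euc n → EReal) (P : ℝ → Euc n → Euc n) : Prop :=
  ∀ α : ℝ, 0 < α → ∀ x p, P α x = p ↔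
    (∀ y, g p + ((1/(2*α) * ‖x - p‖^2 : ℝ) : EReal) ≤ g y + ((1/(2*α) * ‖x - y‖^2 : ℝ) : EReal))

section Gradient

variable {E : Type*} [NormedAddCommGroup E] [InnerProductSpace ℝ E]

theorem inner_le_of_sq_norm_le_inner {L lam : ℝ} (hlam : 0 < lam) {d u w : E}
    (hd : ‖d‖ ^ 2 ≤ L * ⟪d, u⟫_ℝ) :
    ⟪d, w⟫_ℝ ≤ L / 2 * ⟪u, w⟫_ℝ + lam / 2 * ‖w‖ ^ 2 + L ^ 2 / (8 * lam) * ‖u‖ ^ 2 := by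
  have hsq : 0 ≤ ‖lam • w + (L / 2) • u - d‖ ^ 2 := sq_nonneg _
  rw [norm_sub_sq_real, norm_add_sq_real, inner_add_left] at hsq
  simp only [norm_smul, real_inner_smul_left, real_inner_smul_right, Real.norm_eq_abs, mul_pow,
    sq_abs] at hsq
  rw [real_inner_comm u w, real_inner_comm d w, real_inner_comm d u] at hsq
  rw [← sub_nonneg, ← mul_nonneg_iff_of_pos_left (by positivity : 0 < 2 * lam)]
  have hexpand : 2 * lam * (L / 2 * ⟪u, w⟫_ℝ + lam / 2 * ‖w‖ ^ 2 + L ^ 2 / (8 * lam) * ‖u‖ ^ 2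
      - ⟪d, w⟫_ℝ) = lam ^ 2 * ‖w‖ ^ 2 + L * lam * ⟪u, w⟫_ℝ + L ^ 2 / 4 * ‖u‖ ^ 2
      - 2 * lam * ⟪d, w⟫_ℝ := by
    field_simp
    ring
  rw [hexpand]
  linarith

theorem inner_forward_backward_residual {lam Lf mu : ℝ} (hmu : mu * (lam + Lf / 2) = 1)
    (x y p g η : E) :
    1 / mu * ⟪(1 - mu * lam) • y - mu • g + (mu * lam) • x + mu • η - p, x - p⟫_ℝ
      = Lf / 2 * ⟪p - y, p - x⟫_ℝ + lam * ‖p - x‖ ^ 2 + ⟪g, p - x⟫_ℝ - ⟪η, p - x⟫_ℝ := by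
  have hmu0 : mu ≠ 0 := left_ne_zero_of_mul_eq_one hmu
  have hvec : p - ((1 - mu * lam) • y - mu • g + (mu * lam) • x + mu • η)
      = mu • ((Lf / 2) • (p - y) + lam • (p - x) + g - η) := by
    linear_combination (norm := module) hmu • (y - p)
  rw [← inner_neg_neg, neg_sub, neg_sub, hvec, real_inner_smul_left, inner_sub_left,
    inner_add_left, inner_add_left, real_inner_smul_left, real_inner_smul_left,
    real_inner_self_eq_norm_sq]
  field_simp

variable [CompleteSpace E] {f : E → ℝ}

theorem HasGradientAt.hasDerivAt_comp_add_smul {g b d : E} {t : ℝ}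
    (hf : HasGradientAt f g (b + t • d)) :
    HasDerivAt (fun s : ℝ => f (b + s • d)) ⟪g, d⟫_ℝ t := by
  have hline : HasDerivAt (fun s : ℝ => b + s • d) d t := by
    simpa using ((hasDerivAt_id t).smul_const d).const_add b
  have h := (hasGradientAt_iff_hasFDerivAt.mp hf).comp_hasDerivAt t hline
  rwa [InnerProductSpace.toDual_apply_apply] at h

theorem ConvexOn.add_inner_le_of_hasGradientAt (hf : ConvexOn ℝ univ f) {g b : E}
    (hb : HasGradientAt f g b) (z : E) : f b + ⟪g, z - b⟫_ℝ ≤ f z := by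
  let line : ℝ →ᵃ[ℝ] E := AffineMap.lineMap b z
  have hconv : ConvexOn ℝ univ (f ∘ line) := hf.comp_affineMap line
  have hderiv : HasDerivAt (f ∘ line) ⟪g, z - b⟫_ℝ 0 := by
    have : HasGradientAt f g (b + (0 : ℝ) • (z - b)) := by simpa using hb
    convert this.hasDerivAt_comp_add_smul using 1
    ext s
    simp [line, AffineMap.lineMap_apply_module', add_comm]
  have hslope := hconv.le_slope_of_hasDerivAt (mem_univ 0) (mem_univ 1) zero_lt_one hderiv
  simp only [slope_def_field, Function.comp_apply, AffineMap.lineMap_apply_one,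
    AffineMap.lineMap_apply_zero, sub_zero, div_one, line] at hslope
  linarith

variable {f' : E → E} {L : ℝ}

theorem le_add_inner_add_sq_of_lipschitz_gradient (hf : ∀ z, HasGradientAt f (f' z) z)
    (hL : ∀ z w, ‖f' z - f' w‖ ≤ L * ‖z - w‖) (b a : E) :
    f a ≤ f b + ⟪f' b, a - b⟫_ℝ + L / 2 * ‖a - b‖ ^ 2 := by
  set d := a - b
  let φ : ℝ → ℝ := fun t => f (b + t • d) - t * ⟪f' b, d⟫_ℝ - L / 2 * t ^ 2 * ‖d‖ ^ 2
  have hφ : ∀ t, HasDerivAt φ (⟪f' (b + t • d) - f' b, d⟫_ℝ - L * t * ‖d‖ ^ 2) t := by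
    intro t
    have h := ((hf (b + t • d)).hasDerivAt_comp_add_smul.sub
      ((hasDerivAt_id t).mul_const ⟪f' b, d⟫_ℝ)).sub
      (((hasDerivAt_pow 2 t).const_mul (L / 2)).mul_const (‖d‖ ^ 2))
    refine h.congr_deriv ?_
    rw [inner_sub_left]
    ring
  have hanti : AntitoneOn φ (Icc 0 1) := by
    refine antitoneOn_of_hasDerivWithinAt_nonpos (convex_Icc 0 1)
      (HasDerivAt.continuousOn fun t _ => hφ t) (fun t _ => (hφ t).hasDerivWithinAt) ?_
    intro t ht
    rw [interior_Icc] at ht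
    have hlip : ‖f' (b + t • d) - f' b‖ ≤ L * t * ‖d‖ := by
      simpa [norm_smul, abs_of_pos ht.1, mul_assoc] using hL (b + t • d) b
    have := real_inner_le_norm (f' (b + t • d) - f' b) d
    nlinarith [norm_nonneg d]
  have h01 := hanti (left_mem_Icc.2 zero_le_one) (right_mem_Icc.2 zero_le_one) zero_le_one
  simp only [φ, zero_smul, add_zero, one_smul, zero_mul, sub_zero, one_pow, mul_one, one_mul,
    d, add_sub_cancel] at h01
  linarith

theorem ConvexOn.add_inner_add_sq_norm_gradient_sub_le (hfc : ConvexOn ℝ univ f)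
    (hf : ∀ z, HasGradientAt f (f' z) z) (hL : ∀ z w, ‖f' z - f' w‖ ≤ L * ‖z - w‖) (hL0 : 0 < L)
    (b a : E) :
    f b + ⟪f' b, a - b⟫_ℝ + 1 / (2 * L) * ‖f' a - f' b‖ ^ 2 ≤ f a := by
  set G := f' a - f' b
  -- compare `b` with one gradient step from `a`
  set z := a - L⁻¹ • G
  have hlow := hfc.add_inner_le_of_hasGradientAt (hf b) z
  have hup := le_add_inner_add_sq_of_lipschitz_gradient hf hL a z
  have hza : z - a = -(L⁻¹ • G) := by simp [z]
  have hzb : z - b = -(L⁻¹ • G) + (a - b) := by simp [z]; abel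
  rw [hza, norm_neg, norm_smul, inner_neg_right, real_inner_smul_right] at hup
  rw [hzb, inner_add_right, inner_neg_right, real_inner_smul_right] at hlow
  have hG : ⟪f' a, G⟫_ℝ - ⟪f' b, G⟫_ℝ = ‖G‖ ^ 2 := by
    rw [← inner_sub_left, real_inner_self_eq_norm_sq]
  rw [Real.norm_eq_abs, abs_inv, abs_of_pos hL0] at hup
  have hstep : 1 / (2 * L) * ‖G‖ ^ 2 = L⁻¹ * ‖G‖ ^ 2 - L / 2 * (L⁻¹ * ‖G‖) ^ 2 := by
    field_simp; ring
  linear_combination hlow + hup - L⁻¹ * hG + hstep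

theorem ConvexOn.sq_norm_gradient_sub_le_inner (hfc : ConvexOn ℝ univ f)
    (hf : ∀ z, HasGradientAt f (f' z) z) (hL : ∀ z w, ‖f' z - f' w‖ ≤ L * ‖z - w‖) (hL0 : 0 < L)
    (a b : E) : ‖f' a - f' b‖ ^ 2 ≤ L * ⟪f' a - f' b, a - b⟫_ℝ := by
  have hab := hfc.add_inner_add_sq_norm_gradient_sub_le hf hL hL0 b a
  have hba := hfc.add_inner_add_sq_norm_gradient_sub_le hf hL hL0 a b
  rw [← norm_neg, neg_sub, ← neg_sub a b, inner_neg_right] at hba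
  have hsum : ‖f' a - f' b‖ ^ 2 / L ≤ ⟪f' a - f' b, a - b⟫_ℝ := by
    have h2 : ‖f' a - f' b‖ ^ 2 / L = 2 * (1 / (2 * L) * ‖f' a - f' b‖ ^ 2) := by
      field_simp
    rw [h2, inner_sub_left]
    linarith
  rwa [div_le_iff₀' hL0] at hsum

theorem ConvexOn.le_add_inner_add_sq_of_lipschitz_gradient (hfc : ConvexOn ℝ univ f)
    (hf : ∀ z, HasGradientAt f (f' z) z) (hL : ∀ z w, ‖f' z - f' w‖ ≤ L * ‖z - w‖) (hL0 : 0 < L)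
    {lam : ℝ} (hlam : 0 < lam) (x y p : E) :
    f p ≤ f x + ⟪f' y, p - x⟫_ℝ + L / 2 * ⟪p - y, p - x⟫_ℝ + lam / 2 * ‖p - x‖ ^ 2
      + L ^ 2 / (8 * lam) * ‖p - y‖ ^ 2 := by
  have hconv := hfc.add_inner_le_of_hasGradientAt (hf p) x
  have hd := inner_le_of_sq_norm_le_inner hlam (w := p - x)
    (hfc.sq_norm_gradient_sub_le_inner hf hL hL0 p y)
  rw [inner_sub_left] at hd
  rw [← neg_sub p x, inner_neg_right] at hconv
  linarith

end Gradient

section Prox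

variable {n : ℕ} {g : Euc n → EReal} {c : ℝ} {v p : Euc n}

theorem ProperE.ne_top_of_forall_le (hg : ProperE g)
    (hmin : ∀ y, g p + ((c * ‖v - p‖ ^ 2 : ℝ) : EReal) ≤ g y + ((c * ‖v - y‖ ^ 2 : ℝ) : EReal)) :
    g p ≠ ⊤ := by
  obtain ⟨z, hz⟩ := hg.2
  intro hp
  have h := hmin z
  rw [hp, EReal.top_add_coe, top_le_iff] at h
  exact EReal.add_ne_top hz (EReal.coe_ne_top _) h

/-- Moving from `p` a fraction `t` towards `z` raises `g` at most linearly in `t`, while the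
quadratic term changes by `-2 c t ⟪v - p, z - p⟫ + O(t²)`; let `t → 0`. -/
theorem ConvexEReal.add_inner_le_of_forall_le (hg : ConvexEReal g) {z : Euc n} {a b : ℝ}
    (hp : g p = a) (hz : g z = b)
    (hmin : ∀ y, g p + ((c * ‖v - p‖ ^ 2 : ℝ) : EReal) ≤ g y + ((c * ‖v - y‖ ^ 2 : ℝ) : EReal)) :
    a + 2 * c * ⟪v - p, z - p⟫_ℝ ≤ b := by
  have hstep : ∀ t ∈ Ioo (0 : ℝ) 1, a + 2 * c * ⟪v - p, z - p⟫_ℝ ≤ b + t * (c * ‖z - p‖ ^ 2) := by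
    intro t ht
    have hconv := hg p z (1 - t) t (by linarith [ht.2]) ht.1.le (by ring)
    rw [hp, hz, ← EReal.coe_mul, ← EReal.coe_mul, ← EReal.coe_add] at hconv
    have hle := (hmin _).trans (add_le_add hconv le_rfl)
    rw [hp, ← EReal.coe_add, ← EReal.coe_add, EReal.coe_le_coe_iff] at hle
    have hseg : v - ((1 - t) • p + t • z) = (v - p) - t • (z - p) := by module
    rw [hseg, norm_sub_sq_real (v - p), norm_smul, real_inner_smul_right, Real.norm_eq_abs, mul_pow,
      sq_abs] at hle
    have hmul : t * (a + 2 * c * ⟪v - p, z - p⟫_ℝ) ≤ t * (b + t * (c * ‖z - p‖ ^ 2)) := by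
      linear_combination hle
    exact le_of_mul_le_mul_left hmul ht.1
  have hlim : Tendsto (fun t : ℝ => b + t * (c * ‖z - p‖ ^ 2)) (𝓝[>] 0) (𝓝 b) := by
    refine tendsto_nhdsWithin_of_tendsto_nhds ?_
    simpa using ((tendsto_id (x := 𝓝 (0 : ℝ))).mul_const (c * ‖z - p‖ ^ 2)).const_add b
  exact ge_of_tendsto hlim (eventually_of_mem (Ioo_mem_nhdsGT zero_lt_one) hstep)

end Prox

theorem stmt4_general {n : ℕ}
    (f : Euc n → ℝ) (f' : Euc n → Euc n) (Lf : ℝ) (hLf : 0 < Lf)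
    (hfconv : ConvexOn ℝ Set.univ f)
    (hfgrad : ∀ z, HasGradientAt f (f' z) z)
    (hflip : ∀ z w, ‖f' z - f' w‖ ≤ Lf * ‖z - w‖)
    (g : Euc n → EReal) (hgproper : ProperE g) (hgconv : ConvexEReal g)
    (h : Euc n → ℝ)
    (F : Euc n → EReal) (hF : ∀ z, F z = ((f z - h z : ℝ) : EReal) + g z)
    (P : ℝ → Euc n → Euc n) (hP : IsProx g P)
    (lam δ mu tau : ℝ) (hlam : 0 < lam)
    (hmu : mu = 2/(2*lam + Lf)) (htau : tau = Lf^2 * δ^2 / (8*lam))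
    (x x' y η xp : Euc n) (hη : η ∈ SubdiffR h x)
    (hxp : xp = P mu ((1 - mu*lam) • y - mu • f' y + (mu*lam) • x + mu • η))
    (hy : ‖xp - y‖ ≤ δ * ‖x' - x‖) :
    F xp ≠ ⊤ ∧
      ((lam/2 * ‖x - xp‖^2 : ℝ) : EReal) ≤ F x - F xp + ((tau * ‖x' - x‖^2 : ℝ) : EReal) := by
  have hmu0 : 0 < mu := by rw [hmu]; positivity
  have hmin := (hP mu hmu0 _ xp).mp hxp.symm
  obtain ⟨Gp, hGp⟩ : ∃ Gp : ℝ, g xp = Gp :=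
    ⟨_, (EReal.coe_toReal (hgproper.ne_top_of_forall_le hmin) (hgproper.1 xp)).symm⟩
  have hFxp : F xp = ((f xp - h xp + Gp : ℝ) : EReal) := by rw [hF, hGp, ← EReal.coe_add]
  refine ⟨hFxp ▸ EReal.coe_ne_top _, ?_⟩
  rcases eq_or_ne (g x) ⊤ with hgx | hgx
  · rw [hF x, hgx, EReal.coe_add_top, hFxp, EReal.top_sub_coe, EReal.top_add_coe]
    exact le_top
  obtain ⟨Gx, hGx⟩ : ∃ Gx : ℝ, g x = Gx := ⟨_, (EReal.coe_toReal hgx (hgproper.1 x)).symm⟩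
  have hprox := hgconv.add_inner_le_of_forall_le hGp hGx hmin
  have hmuL : mu * (lam + Lf / 2) = 1 := by rw [hmu]; field_simp
  rw [show (2 : ℝ) * (1 / (2 * mu)) = 1 / mu by ring, inner_forward_backward_residual hmuL] at hprox
  have hsub : h x + ⟪η, xp - x⟫_ℝ ≤ h xp := hη xp
  have hfxp := hfconv.le_add_inner_add_sq_of_lipschitz_gradient hfgrad hflip hLf hlam x y xp
  have htail : Lf ^ 2 / (8 * lam) * ‖xp - y‖ ^ 2 ≤ tau * ‖x' - x‖ ^ 2 := by
    have hy2 : ‖xp - y‖ ^ 2 ≤ (δ * ‖x' - x‖) ^ 2 := pow_le_pow_left₀ (norm_nonneg _) hy 2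
    calc Lf ^ 2 / (8 * lam) * ‖xp - y‖ ^ 2 ≤ Lf ^ 2 / (8 * lam) * (δ * ‖x' - x‖) ^ 2 := by gcongr
      _ = tau * ‖x' - x‖ ^ 2 := by rw [htau]; ring
  rw [hF x, hGx, hFxp, ← EReal.coe_add, ← EReal.coe_sub, ← EReal.coe_add, EReal.coe_le_coe_iff,
    norm_sub_rev x xp]
  linarith

/-- One-step descent inequality: with `λ > 0`, `δ ∈ (0, 2λ/L_f)`,
`μ = 2/(2λ + L_f)`, `τ = L_f²δ²/(8λ)`, if `η ∈ ∂h(x)`,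
`x⁺ = Prox_{μg}((1-μλ)y - μ∇f(y) + μλx + μη)` and `‖x⁺ - y‖ ≤ δ‖x' - x‖`, then `F(x⁺)` is
finite and `(λ/2)‖x - x⁺‖² ≤ F(x) - F(x⁺) + τ‖x' - x‖²` in the extended reals,
where `F = f + g - h`. -/
theorem stmt4 {n : ℕ}
    (f : Euc n → ℝ) (f' : Euc n → Euc n) (Lf : ℝ) (hLf : 0 < Lf)
    (hfconv : ConvexOn ℝ Set.univ f)
    (hfgrad : ∀ z, HasGradientAt f (f' z) z)
    (hflip : ∀ z w, ‖f' z - f' w‖ ≤ Lf * ‖z - w‖)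
    (g : Euc n → EReal) (hgproper : ProperE g) (hgconv : ConvexEReal g)
    (hglsc : LowerSemicontinuous g)
    (h : Euc n → ℝ) (hhconv : ConvexOn ℝ Set.univ h)
    (F : Euc n → EReal) (hF : ∀ z, F z = ((f z - h z : ℝ) : EReal) + g z)
    (P : ℝ → Euc n → Euc n) (hP : IsProx g P)
    (lam δ mu tau : ℝ) (hlam : 0 < lam) (hδ : δ ∈ Set.Ioo 0 (2*lam/Lf))
    (hmu : mu = 2/(2*lam + Lf)) (htau : tau = Lf^2 * δ^2 / (8*lam))
    (x x' y η xp : Euc n) (hη : η ∈ SubdiffR h x)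
    (hxp : xp = P mu ((1 - mu*lam) • y - mu • f' y + (mu*lam) • x + mu • η))
    (hy : ‖xp - y‖ ≤ δ * ‖x' - x‖) :
    F xp ≠ ⊤ ∧
      ((lam/2 * ‖x - xp‖^2 : ℝ) : EReal) ≤ F x - F xp + ((tau * ‖x' - x‖^2 : ℝ) : EReal) :=
  stmt4_general f f' Lf hLf hfconv hfgrad hflip g hgproper hgconv h F hF P hP lam δ mu tau hlam hmu
    htau x x' y η xp hη hxp hy
end
end

section
/- Let (x^k)_{k ≥ −1} be a cDCA sequence with x⁰ ∈ dom g, and suppose F is level-bounded (for every r ∈ ℝ the set {x ∈ ℝⁿ : F(x) ≤ r} is bounded). Then the limits lim_{k→∞} F(x^k) and lim_{k→∞} E(x^k, x^{k−1}) both exist and are equal, and for every accumulation point x̂ of (x^k) one has lim_{k→∞} F(x^k) = lim_{k→∞} E(x^k, x^{k−1}) = F(x̂). -/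
open Set Filter Topology
open scoped InnerProductSpace

noncomputable section

/-- A cDCA sequence, indexed so that `x 0 = x⁻¹` and `x (k+1) = xᵏ` for `k ≥ 0`:
for every `k ≥ 0` there exist `ηᵏ ∈ ∂h(xᵏ)` and `yᵏ` with
`x^{k+1} = Prox_{μg}((1-μλ)yᵏ - μ∇f(yᵏ) + μλxᵏ + μηᵏ)` and
`‖x^{k+1} - yᵏ‖ ≤ δ‖x^{k-1} - xᵏ‖`. -/
def IsCDCA {n : ℕ} (f' : Euc n → Euc n) (h : Euc n → ℝ) (P : ℝ → Euc n → Euc n)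
    (lam mu δ : ℝ) (x : ℕ → Euc n) : Prop :=
  ∀ k : ℕ, ∃ η ∈ SubdiffR h (x (k+1)), ∃ y,
    x (k+2) = P mu ((1 - mu*lam) • y - mu • f' y + (mu*lam) • x (k+1) + mu • η) ∧
    ‖x (k+2) - y‖ ≤ δ * ‖x k - x (k+1)‖

/-!
With `θ = L/(L + 2λ)`, a `θ`-weighted combination of the co-coercivity inequalities of `∇f`
along `xᵏ⁺¹ → yᵏ → xᵏ` and `xᵏ⁺¹ → xᵏ`, added to the optimality condition of the proximal step
and to the subgradient inequality of `h` at `xᵏ`, gives the sufficient decrease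
`F(xᵏ⁺¹) + λ/2 ‖xᵏ⁺¹ - xᵏ‖² ≤ F(xᵏ) + τ ‖xᵏ - xᵏ⁻¹‖²`. As `τ < λ/2`, the energy
`E(xᵏ, xᵏ⁻¹)` is nonincreasing, so level-boundedness traps the iterates in a compact ball, on
which the lower semicontinuous `F` is bounded below; hence `E(xᵏ, xᵏ⁻¹)` converges, the steps
vanish, and `F(xᵏ)` has the same limit `L`. At an accumulation point `x̂`, lower semicontinuity
gives `F(x̂) ≤ L`; conversely the optimality condition of the proximal step, whose subgradients
stay bounded because the iterates do, gives `g(xᵏ) ≤ g(x̂) + C ‖xᵏ - x̂‖` and so `L ≤ F(x̂)`.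
-/

section Quadratic

variable {E : Type*} [NormedAddCommGroup E] [InnerProductSpace ℝ E]

lemma mul_one_sub_mul_norm_sub_sq_le (θ : ℝ) (u v w : E) :
    θ * (1 - θ) * ‖u - v‖ ^ 2 ≤ θ * ‖w - u‖ ^ 2 + (1 - θ) * ‖w - v‖ ^ 2 := by
  have key : θ * ‖w - u‖ ^ 2 + (1 - θ) * ‖w - v‖ ^ 2 =
      ‖w - (θ • u + (1 - θ) • v)‖ ^ 2 + θ * (1 - θ) * ‖u - v‖ ^ 2 := by
    simp only [← real_inner_self_eq_norm_sq, inner_sub_left, inner_sub_right, inner_add_left,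
      inner_add_right, real_inner_smul_left, real_inner_smul_right, real_inner_comm u v,
      real_inner_comm u w, real_inner_comm v w]
    ring
  nlinarith [sq_nonneg ‖w - (θ • u + (1 - θ) • v)‖]

lemma cdca_quadratic_form_le {L lam θ : ℝ} (hL : 0 < L) (hlam : 0 < lam)
    (hθ : θ = L / (L + 2 * lam)) (e a b : E) :
    θ * ⟪e, a⟫_ℝ - (1 - θ) * ⟪e, b⟫_ℝ + L / 2 * ⟪a, b⟫_ℝ - lam / 2 * ‖b‖ ^ 2 ≤
      θ * (2 - θ) / (2 * L) * ‖e‖ ^ 2 + L ^ 2 / (8 * lam) * ‖a‖ ^ 2 := by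
  set m := L • a - (2 * lam) • b - (2 * (1 - θ)) • e
  have key : θ * (2 - θ) / (2 * L) * ‖e‖ ^ 2 + L ^ 2 / (8 * lam) * ‖a‖ ^ 2 -
      (θ * ⟪e, a⟫_ℝ - (1 - θ) * ⟪e, b⟫_ℝ + L / 2 * ⟪a, b⟫_ℝ - lam / 2 * ‖b‖ ^ 2) =
      θ ^ 2 / (2 * L) * ‖e‖ ^ 2 + 1 / (8 * lam) * ‖m‖ ^ 2 := by
    simp only [m, ← real_inner_self_eq_norm_sq, inner_sub_left, inner_sub_right,
      real_inner_smul_left, real_inner_smul_right, real_inner_comm a e, real_inner_comm b e,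
      real_inner_comm b a]
    subst hθ
    field_simp
    ring
  have : 0 ≤ θ ^ 2 / (2 * L) * ‖e‖ ^ 2 + 1 / (8 * lam) * ‖m‖ ^ 2 := by positivity
  linarith

end Quadratic

section SmoothConvex

variable {E : Type*} [NormedAddCommGroup E] [InnerProductSpace ℝ E] [CompleteSpace E]
  {f : E → ℝ} {f' : E → E} {L : ℝ}

lemma hasDerivAt_comp_lineMap_of_hasGradientAt (hf : ∀ z, HasGradientAt f (f' z) z)
    (a b : E) (t : ℝ) :
    HasDerivAt (f ∘ AffineMap.lineMap a b) ⟪f' (AffineMap.lineMap a b t), b - a⟫_ℝ t := by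
  have := (hf (AffineMap.lineMap a b t)).hasFDerivAt.comp_hasDerivAt t
    (AffineMap.hasDerivAt_lineMap (a := a) (b := b))
  rwa [InnerProductSpace.toDual_apply_apply] at this

lemma ConvexOn.add_inner_gradient_le (hconv : ConvexOn ℝ univ f)
    (hf : ∀ z, HasGradientAt f (f' z) z) (a b : E) :
    f a + ⟪f' a, b - a⟫_ℝ ≤ f b := by
  have h := (hconv.comp_affineMap (AffineMap.lineMap a b)).le_slope_of_hasDerivAt trivial trivial
    zero_lt_one (by simpa using hasDerivAt_comp_lineMap_of_hasGradientAt hf a b 0)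
  simp only [slope, Function.comp_apply, AffineMap.lineMap_apply_one,
    AffineMap.lineMap_apply_zero, vsub_eq_sub, sub_zero, inv_one, one_smul] at h
  linarith

lemma le_add_inner_add_of_lipschitz_gradient (hf : ∀ z, HasGradientAt f (f' z) z)
    (hL : ∀ z w, ‖f' z - f' w‖ ≤ L * ‖z - w‖) (a b : E) :
    f b ≤ f a + ⟪f' a, b - a⟫_ℝ + L / 2 * ‖b - a‖ ^ 2 := by
  set v := b - a
  have hψ : ∀ t, HasDerivAt
      (fun s => (f ∘ AffineMap.lineMap a b) s - s * ⟪f' a, v⟫_ℝ - L / 2 * s ^ 2 * ‖v‖ ^ 2)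
      (⟪f' (AffineMap.lineMap a b t), v⟫_ℝ - ⟪f' a, v⟫_ℝ - L * t * ‖v‖ ^ 2) t := fun t => by
    refine (((hasDerivAt_comp_lineMap_of_hasGradientAt hf a b t).sub
      ((hasDerivAt_id t).mul_const _)).sub
      (((hasDerivAt_pow 2 t).const_mul (L / 2)).mul_const (‖v‖ ^ 2))).congr_deriv ?_
    simp only [v]; push_cast; ring
  have hψ_nonpos : ∀ t ∈ interior (Icc (0 : ℝ) 1),
      ⟪f' (AffineMap.lineMap a b t), v⟫_ℝ - ⟪f' a, v⟫_ℝ - L * t * ‖v‖ ^ 2 ≤ 0 := by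
    intro t ht
    rw [interior_Icc] at ht
    have hlip := hL (AffineMap.lineMap a b t) a
    rw [show AffineMap.lineMap a b t - a = t • v by simp [v, AffineMap.lineMap_apply_module'],
      norm_smul, Real.norm_of_nonneg ht.1.le] at hlip
    have hcs := real_inner_le_norm (f' (AffineMap.lineMap a b t) - f' a) v
    rw [inner_sub_left] at hcs
    nlinarith [norm_nonneg v]
  have := antitoneOn_of_hasDerivWithinAt_nonpos (convex_Icc 0 1)
    (fun t _ => (hψ t).continuousAt.continuousWithinAt) (fun t _ => (hψ t).hasDerivWithinAt)
    hψ_nonpos (left_mem_Icc.2 zero_le_one) (right_mem_Icc.2 zero_le_one) zero_le_one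
  simp only [Function.comp_apply, AffineMap.lineMap_apply_one, AffineMap.lineMap_apply_zero] at this
  linarith

lemma ConvexOn.add_inner_add_norm_sub_sq_le (hconv : ConvexOn ℝ univ f)
    (hf : ∀ z, HasGradientAt f (f' z) z) (hL : ∀ z w, ‖f' z - f' w‖ ≤ L * ‖z - w‖)
    (hL0 : 0 < L) (a b : E) :
    f a + ⟪f' a, b - a⟫_ℝ + 1 / (2 * L) * ‖f' b - f' a‖ ^ 2 ≤ f b := by
  set Δ := f' b - f' a
  -- test convexity at `a` and the descent lemma at `b` against the gradient step from `b`
  set z := b - L⁻¹ • Δ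
  have h1 := hconv.add_inner_gradient_le hf a z
  have h2 := le_add_inner_add_of_lipschitz_gradient hf hL b z
  have hza : z - a = (b - a) - L⁻¹ • Δ := by simp only [z]; abel
  have hzb : z - b = -(L⁻¹ • Δ) := by simp only [z]; abel
  rw [hza, inner_sub_right, real_inner_smul_right] at h1
  rw [hzb, inner_neg_right, real_inner_smul_right, norm_neg, norm_smul, mul_pow,
    Real.norm_of_nonneg (inv_nonneg.2 hL0.le)] at h2
  have hL' : L / 2 * (L⁻¹ ^ 2 * ‖Δ‖ ^ 2) = 1 / (2 * L) * ‖Δ‖ ^ 2 := by field_simp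
  have hL'' : L⁻¹ * ‖Δ‖ ^ 2 = 2 * (1 / (2 * L) * ‖Δ‖ ^ 2) := by field_simp
  have hΔ : L⁻¹ * ⟪f' b, Δ⟫_ℝ - L⁻¹ * ⟪f' a, Δ⟫_ℝ = L⁻¹ * ‖Δ‖ ^ 2 := by
    rw [← mul_sub, ← inner_sub_left, real_inner_self_eq_norm_sq]
  linarith

lemma ConvexOn.three_point_le (hconv : ConvexOn ℝ univ f)
    (hf : ∀ z, HasGradientAt f (f' z) z) (hL : ∀ z w, ‖f' z - f' w‖ ≤ L * ‖z - w‖)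
    (hL0 : 0 < L) {lam : ℝ} (hlam : 0 < lam) (p q y : E) :
    f p + ⟪f' y, q - p⟫_ℝ + L / 2 * ⟪p - y, q - p⟫_ℝ ≤
      f q + lam / 2 * ‖q - p‖ ^ 2 + L ^ 2 / (8 * lam) * ‖p - y‖ ^ 2 := by
  set θ := L / (L + 2 * lam) with hθ
  have hθ0 : 0 ≤ θ := by positivity
  have hθ1 : 0 ≤ 1 - θ := by rw [sub_nonneg, hθ, div_le_one (by positivity)]; linarith
  -- weight the co-coercivity inequalities along `p → y → q` by `θ` and along `p → q` by `1 - θ`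
  have hpy := hconv.add_inner_add_norm_sub_sq_le hf hL hL0 p y
  have hyq := hconv.add_inner_add_norm_sub_sq_le hf hL hL0 y q
  have hpq := hconv.add_inner_add_norm_sub_sq_le hf hL hL0 p q
  have hvar := mul_one_sub_mul_norm_sub_sq_le θ (f' y) (f' p) (f' q)
  have hquad := cdca_quadratic_form_le hL0 hlam hθ (f' p - f' y) (p - y) (q - p)
  rw [norm_sub_rev (f' p), inner_sub_left, inner_sub_left] at hquad
  have e1 : ⟪f' p, y - p⟫_ℝ = -⟪f' p, p - y⟫_ℝ := by rw [← inner_neg_right, neg_sub]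
  have e2 : ⟪f' y, q - y⟫_ℝ = ⟪f' y, p - y⟫_ℝ + ⟪f' y, q - p⟫_ℝ := by
    rw [← inner_add_right, sub_add_sub_cancel']
  rw [e1] at hpy
  rw [e2] at hyq
  have h1 := mul_le_mul_of_nonneg_left (add_le_add hpy hyq) hθ0
  have h2 := mul_le_mul_of_nonneg_left hpq hθ1
  have h3 := div_le_div_of_nonneg_right hvar (by positivity : (0 : ℝ) ≤ 2 * L)
  linear_combination h1 + h2 + h3 + hquad

end SmoothConvex

section Prox

variable {n : ℕ} {g : Euc n → EReal} {P : ℝ → Euc n → Euc n} {α : ℝ}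

lemma ConvexEReal.le_coe (hconv : ConvexEReal g) (hg : ProperE g) {x y : Euc n}
    (hx : g x ≠ ⊤) (hy : g y ≠ ⊤) {a b : ℝ} (ha : 0 ≤ a) (hb : 0 ≤ b) (hab : a + b = 1) :
    g (a • x + b • y) ≤ ((a * (g x).toReal + b * (g y).toReal : ℝ) : EReal) := by
  have h := hconv x y a b ha hb hab
  rwa [← EReal.coe_toReal hx (hg.1 x), ← EReal.coe_toReal hy (hg.1 y), ← EReal.coe_mul,
    ← EReal.coe_mul, ← EReal.coe_add] at h

lemma IsProx.apply_add_le (hP : IsProx g P) (hα : 0 < α) (w y : Euc n) :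
    g (P α w) + ((1 / (2 * α) * ‖w - P α w‖ ^ 2 : ℝ) : EReal) ≤
      g y + ((1 / (2 * α) * ‖w - y‖ ^ 2 : ℝ) : EReal) :=
  (hP α hα w _).1 rfl y

lemma IsProx.ne_top (hg : ProperE g) (hP : IsProx g P) (hα : 0 < α) (w : Euc n) :
    g (P α w) ≠ ⊤ := by
  obtain ⟨y, hy⟩ := hg.2
  intro htop
  have h := hP.apply_add_le hα w y
  rw [htop, EReal.top_add_of_ne_bot (EReal.coe_ne_bot _), top_le_iff] at h
  exact EReal.add_ne_top hy (EReal.coe_ne_top _) h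

lemma IsProx.toReal_le (hg : ProperE g) (hP : IsProx g P) (hα : 0 < α) (w : Euc n) {z : Euc n}
    (hz : g z ≠ ⊤) :
    (g (P α w)).toReal + 1 / (2 * α) * ‖w - P α w‖ ^ 2 ≤
      (g z).toReal + 1 / (2 * α) * ‖w - z‖ ^ 2 := by
  have h := hP.apply_add_le hα w z
  rw [← EReal.coe_toReal (hP.ne_top hg hα w) (hg.1 _), ← EReal.coe_toReal hz (hg.1 z),
    ← EReal.coe_add, ← EReal.coe_add] at h
  exact_mod_cast h

lemma IsProx.toReal_add_inner_le_add_mul (hg : ProperE g) (hconv : ConvexEReal g)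
    (hP : IsProx g P) (hα : 0 < α) (w : Euc n) {z : Euc n} (hz : g z ≠ ⊤) {t : ℝ} (ht0 : 0 < t)
    (ht1 : t ≤ 1) :
    (g (P α w)).toReal + ⟪α⁻¹ • (w - P α w), z - P α w⟫_ℝ ≤
      (g z).toReal + t / (2 * α) * ‖z - P α w‖ ^ 2 := by
  set p := P α w
  have hseg : (1 - t) • p + t • z = p + t • (z - p) := by module
  have hconv_t := hconv.le_coe hg (hP.ne_top hg hα w) hz (sub_nonneg.2 ht1) ht0.le
    (sub_add_cancel 1 t)
  rw [hseg] at hconv_t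
  have hmin := hP.toReal_le hg hα w (ne_top_of_le_ne_top (EReal.coe_ne_top _) hconv_t)
  have hconv_t' := EReal.toReal_le_toReal hconv_t (hg.1 _) (EReal.coe_ne_top _)
  rw [EReal.toReal_coe] at hconv_t'
  have hnorm : ‖w - (p + t • (z - p))‖ ^ 2 =
      ‖w - p‖ ^ 2 - 2 * t * ⟪w - p, z - p⟫_ℝ + t ^ 2 * ‖z - p‖ ^ 2 := by
    rw [← sub_sub, norm_sub_sq_real, real_inner_smul_right, norm_smul, mul_pow,
      Real.norm_eq_abs, sq_abs]
    ring
  rw [hnorm] at hmin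
  rw [real_inner_smul_left]
  refine le_of_mul_le_mul_left ?_ ht0
  linear_combination hmin + hconv_t'

lemma IsProx.toReal_add_inner_le (hg : ProperE g) (hconv : ConvexEReal g) (hP : IsProx g P)
    (hα : 0 < α) (w : Euc n) {z : Euc n} (hz : g z ≠ ⊤) :
    (g (P α w)).toReal + ⟪α⁻¹ • (w - P α w), z - P α w⟫_ℝ ≤ (g z).toReal := by
  have hlim : Tendsto (fun t : ℝ => (g z).toReal + t / (2 * α) * ‖z - P α w‖ ^ 2) (𝓝[>] 0)
      (𝓝 (g z).toReal) := by
    apply tendsto_nhdsWithin_of_tendsto_nhds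
    convert (by fun_prop : Continuous fun t : ℝ =>
      (g z).toReal + t / (2 * α) * ‖z - P α w‖ ^ 2).tendsto 0 using 2
    simp
  exact ge_of_tendsto hlim (eventually_of_mem (Ioc_mem_nhdsGT zero_lt_one) fun t ht =>
    hP.toReal_add_inner_le_add_mul hg hconv hα w hz ht.1 ht.2)

end Prox

section Sequences

lemma antitone_add_mul_sq_of_descent {a d : ℕ → ℝ} {τ ρ : ℝ} (hτρ : τ ≤ ρ)
    (hdesc : ∀ k, a (k + 1) + ρ * d (k + 1) ^ 2 ≤ a k + τ * d k ^ 2) :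
    Antitone fun k => a k + τ * d k ^ 2 :=
  antitone_nat_of_succ_le fun k => by
    nlinarith [hdesc k, mul_nonneg (sub_nonneg.2 hτρ) (sq_nonneg (d (k + 1)))]

lemma exists_tendsto_of_descent {a d : ℕ → ℝ} {τ ρ : ℝ} (hτ : 0 ≤ τ) (hτρ : τ < ρ)
    (hdesc : ∀ k, a (k + 1) + ρ * d (k + 1) ^ 2 ≤ a k + τ * d k ^ 2) (hbdd : BddBelow (range a)) :
    ∃ L, Tendsto (fun k => a k + τ * d k ^ 2) atTop (𝓝 L) ∧ Tendsto a atTop (𝓝 L) := by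
  set e := fun k => a k + τ * d k ^ 2
  obtain ⟨b, hb⟩ := hbdd
  have he : Tendsto e atTop (𝓝 (⨅ k, e k)) :=
    tendsto_atTop_ciInf (antitone_add_mul_sq_of_descent hτρ.le hdesc)
      ⟨b, by rintro _ ⟨k, rfl⟩; nlinarith [hb ⟨k, rfl⟩, mul_nonneg hτ (sq_nonneg (d k))]⟩
  have he1 := he.comp (tendsto_add_atTop_nat 1)
  -- the energy gaps `e k - e (k + 1) ≥ (ρ - τ) d (k + 1) ^ 2` tend to zero
  have hd : Tendsto (fun k => τ * d (k + 1) ^ 2) atTop (𝓝 0) := by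
    have hgap : Tendsto (fun k => τ / (ρ - τ) * (e k - e (k + 1))) atTop (𝓝 0) := by
      simpa using (he.sub he1).const_mul (τ / (ρ - τ))
    refine tendsto_of_tendsto_of_tendsto_of_le_of_le tendsto_const_nhds hgap
      (fun k => by positivity) fun k => ?_
    rw [div_mul_eq_mul_div, le_div_iff₀ (sub_pos.2 hτρ)]
    nlinarith [hdesc k, mul_nonneg hτ (sq_nonneg (d (k + 1)))]
  refine ⟨_, he, (tendsto_add_atTop_iff_nat 1).1 ?_⟩
  simpa [e] using he1.sub hd

lemma exists_forall_norm_le_of_succ_mem {E : Type*} [SeminormedAddCommGroup E] {u : ℕ → E}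
    {S : Set E} (hS : Bornology.IsBounded S) (hu : ∀ k, u (k + 1) ∈ S) :
    ∃ R, ∀ m, ‖u m‖ ≤ R := by
  obtain ⟨R, hR⟩ := hS.exists_norm_le
  refine ⟨max R ‖u 0‖, fun m => ?_⟩
  cases m with
  | zero => exact le_max_right _ _
  | succ k => exact (hR _ (hu k)).trans (le_max_left _ _)

end Sequences

section ExtendedReal

lemma coe_add_eq_coe_add_toReal (r : ℝ) {a : EReal} (ha : a ≠ ⊤) (hb : a ≠ ⊥) :
    (r : EReal) + a = ((r + a.toReal : ℝ) : EReal) := by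
  rw [EReal.coe_add, EReal.coe_toReal ha hb]

lemma LowerSemicontinuousAt.le_of_tendsto {α ι γ : Type*} [TopologicalSpace α] [LinearOrder γ]
    [DenselyOrdered γ] [TopologicalSpace γ] [OrderTopology γ] {F : α → γ} {a : α} {b : γ}
    {l : Filter ι} [l.NeBot] {u : ι → α} (hF : LowerSemicontinuousAt F a)
    (hu : Tendsto u l (𝓝 a)) (hb : Tendsto (fun i => F (u i)) l (𝓝 b)) : F a ≤ b := by
  by_contra! hlt
  obtain ⟨c, hbc, hca⟩ := exists_between hlt
  obtain ⟨i, hi1, hi2⟩ := ((hu.eventually (hF c hca)).and (hb.eventually (gt_mem_nhds hbc))).exists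
  exact lt_asymm hi1 hi2

lemma lowerSemicontinuous_coe_add {α : Type*} [TopologicalSpace α] {φ : α → ℝ} {g : α → EReal}
    (hφ : Continuous φ) (hg : LowerSemicontinuous g) :
    LowerSemicontinuous fun z => (φ z : EReal) + g z :=
  (continuous_coe_real_ereal.comp hφ).lowerSemicontinuous.add' hg fun _ =>
    EReal.continuousAt_add (Or.inl (EReal.coe_ne_top _)) (Or.inl (EReal.coe_ne_bot _))

lemma IsCompact.exists_coe_le_of_lowerSemicontinuous {α : Type*} [TopologicalSpace α]
    {F : α → EReal} {K : Set α} (hK : IsCompact K) (hF : LowerSemicontinuous F)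
    (hbot : ∀ z, F z ≠ ⊥) : ∃ b : ℝ, ∀ z ∈ K, (b : EReal) ≤ F z := by
  rcases K.eq_empty_or_nonempty with rfl | hne
  · exact ⟨0, by simp⟩
  obtain ⟨z₀, -, hmin⟩ := (hF.lowerSemicontinuousOn K).exists_isMinOn hne hK
  exact ⟨(F z₀).toReal, fun z hz => (EReal.coe_toReal_le (hbot z₀)).trans (hmin hz)⟩

lemma le_of_toReal_le_add_mul_norm {E : Type*} [SeminormedAddCommGroup E] {φ : E → ℝ}
    {g : E → EReal} {u : ℕ → E} {z : E} {C L : ℝ} (hφ : ContinuousAt φ z)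
    (hu : Tendsto u atTop (𝓝 z))
    (hL : Tendsto (fun m => φ (u m) + (g (u m)).toReal) atTop (𝓝 L))
    (hC : ∀ᶠ m in atTop, (g (u m)).toReal ≤ (g z).toReal + C * ‖u m - z‖) :
    L ≤ φ z + (g z).toReal := by
  have hdist : Tendsto (fun m => ‖u m - z‖) atTop (𝓝 0) := tendsto_iff_norm_sub_tendsto_zero.1 hu
  have hrhs : Tendsto (fun m => φ (u m) + ((g z).toReal + C * ‖u m - z‖)) atTop
      (𝓝 (φ z + (g z).toReal)) := by
    simpa using (hφ.tendsto.comp hu).add (tendsto_const_nhds.add (hdist.const_mul C))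
  exact le_of_tendsto_of_tendsto hL hrhs (hC.mono fun m hm => by linarith)

end ExtendedReal

section CDCA

variable {n : ℕ} {f : Euc n → ℝ} {f' : Euc n → Euc n} {g : Euc n → EReal} {h : Euc n → ℝ}
  {P : ℝ → Euc n → Euc n} {Lf lam mu δ tau : ℝ}

lemma exists_norm_le_of_mem_subdiffR (hh : Continuous h) (R : ℝ) :
    ∃ C, ∀ u ∈ Metric.closedBall (0 : Euc n) R, ∀ η ∈ SubdiffR h u, ‖η‖ ≤ C := by
  obtain ⟨M, hM⟩ := (isCompact_closedBall (0 : Euc n) (R + 1)).exists_bound_of_continuousOn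
    hh.continuousOn
  refine ⟨2 * M, fun u hu η hη => ?_⟩
  have hu' : u ∈ Metric.closedBall (0 : Euc n) (R + 1) :=
    Metric.closedBall_subset_closedBall (by linarith) hu
  rcases eq_or_ne η 0 with rfl | hη0
  · simpa using (norm_nonneg _).trans (hM u hu')
  -- test the subgradient inequality in the unit direction of `η`
  set z := u + ‖η‖⁻¹ • η
  have hz : z ∈ Metric.closedBall (0 : Euc n) (R + 1) := by
    rw [mem_closedBall_zero_iff] at hu ⊢
    calc ‖z‖ ≤ ‖u‖ + ‖‖η‖⁻¹ • η‖ := norm_add_le _ _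
      _ ≤ R + 1 := by
        rw [norm_smul, norm_inv, norm_norm, inv_mul_cancel₀ (norm_ne_zero_iff.2 hη0)]
        linarith
  have hinner : ⟪η, z - u⟫_ℝ = ‖η‖ := by
    rw [add_sub_cancel_left, real_inner_smul_right, real_inner_self_eq_norm_sq]
    field_simp [norm_ne_zero_iff.2 hη0]
  have := hη z
  rw [hinner] at this
  linarith [abs_le.1 (hM u hu'), abs_le.1 (hM z hz)]

lemma cdca_step_toReal_add_inner_le (hg : ProperE g) (hgconv : ConvexEReal g) (hP : IsProx g P)
    (hμ : 0 < mu) (hmu : mu = 2 / (2 * lam + Lf)) {p q y η : Euc n}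
    (hp : p = P mu ((1 - mu * lam) • y - mu • f' y + (mu * lam) • q + mu • η)) {z : Euc n}
    (hz : g z ≠ ⊤) :
    (g p).toReal + ⟪(Lf / 2) • (y - p) + lam • (q - p) + η - f' y, z - p⟫_ℝ ≤ (g z).toReal := by
  have hopt := hP.toReal_add_inner_le hg hgconv hμ
    ((1 - mu * lam) • y - mu • f' y + (mu * lam) • q + mu • η) hz
  rw [← hp] at hopt
  convert hopt using 3
  have hmul : mu * (2 * lam + Lf) = 2 := by
    rw [hmu, div_mul_cancel₀]
    rintro hν
    rw [hν, div_zero] at hmu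
    exact hμ.ne' hmu
  match_scalars <;> field_simp <;> linarith

lemma cdca_step_descent (hLf : 0 < Lf) (hfconv : ConvexOn ℝ univ f)
    (hfgrad : ∀ z, HasGradientAt f (f' z) z) (hflip : ∀ z w, ‖f' z - f' w‖ ≤ Lf * ‖z - w‖)
    (hg : ProperE g) (hgconv : ConvexEReal g) (hP : IsProx g P) (hlam : 0 < lam)
    (hμ : 0 < mu) (hmu : mu = 2 / (2 * lam + Lf))
    (htau : tau = Lf ^ 2 * δ ^ 2 / (8 * lam)) {p q r y η : Euc n} (hη : η ∈ SubdiffR h q)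
    (hp : p = P mu ((1 - mu * lam) • y - mu • f' y + (mu * lam) • q + mu • η))
    (hpy : ‖p - y‖ ≤ δ * ‖r - q‖) (hq : g q ≠ ⊤) :
    f p - h p + (g p).toReal + lam / 2 * ‖p - q‖ ^ 2 ≤
      f q - h q + (g q).toReal + tau * ‖r - q‖ ^ 2 := by
  have hopt := cdca_step_toReal_add_inner_le hg hgconv hP hμ hmu hp hq
  have hsub := hη p
  have hsmooth := hfconv.three_point_le hfgrad hflip hLf hlam p q y
  have hextra : Lf ^ 2 / (8 * lam) * ‖p - y‖ ^ 2 ≤ tau * ‖r - q‖ ^ 2 := by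
    have : ‖p - y‖ ^ 2 ≤ δ ^ 2 * ‖r - q‖ ^ 2 := by rw [← mul_pow]; gcongr
    rw [htau, div_mul_eq_mul_div, div_mul_eq_mul_div, mul_assoc]
    gcongr
  rw [inner_sub_left, inner_add_left, inner_add_left, real_inner_smul_left,
    real_inner_smul_left, real_inner_self_eq_norm_sq] at hopt
  rw [← neg_sub q p, inner_neg_right] at hsub
  rw [← neg_sub p y, inner_neg_left] at hopt
  rw [norm_sub_rev p q]
  linarith

variable {x : ℕ → Euc n}

lemma IsCDCA.ne_top (hx : IsCDCA f' h P lam mu δ x) (hg : ProperE g) (hP : IsProx g P)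
    (hμ : 0 < mu) (hx0 : g (x 1) ≠ ⊤) : ∀ k, g (x (k + 1)) ≠ ⊤
  | 0 => hx0
  | k + 1 => by
    obtain ⟨η, -, y, hxy, -⟩ := hx k
    rw [hxy]
    exact hP.ne_top hg hμ _

lemma IsCDCA.exists_toReal_le (hx : IsCDCA f' h P lam mu δ x) (hLf : 0 < Lf)
    (hflip : ∀ z w, ‖f' z - f' w‖ ≤ Lf * ‖z - w‖) (hg : ProperE g) (hgconv : ConvexEReal g)
    (hP : IsProx g P) (hh : Continuous h) (hlam : 0 < lam) (hμ : 0 < mu)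
    (hmu : mu = 2 / (2 * lam + Lf)) (hδ : 0 ≤ δ) {R : ℝ} (hR : ∀ m, ‖x m‖ ≤ R) :
    ∃ C, ∀ m, 2 ≤ m → ∀ z, g z ≠ ⊤ → (g (x m)).toReal ≤ (g z).toReal + C * ‖x m - z‖ := by
  obtain ⟨Cη, hCη⟩ := exists_norm_le_of_mem_subdiffR hh R
  refine ⟨Lf / 2 * (δ * (2 * R)) + lam * (2 * R) + Cη + (‖f' 0‖ + Lf * (R + δ * (2 * R))),
    fun m hm z hz => ?_⟩
  obtain ⟨k, rfl⟩ := Nat.exists_eq_add_of_le' hm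
  obtain ⟨η, hη, y, hxy, hy⟩ := hx k
  have hopt := cdca_step_toReal_add_inner_le hg hgconv hP hμ hmu hxy hz
  set v := (Lf / 2) • (y - x (k + 2)) + lam • (x (k + 1) - x (k + 2)) + η - f' y
  have hdiff : ∀ i j, ‖x i - x j‖ ≤ 2 * R := fun i j =>
    (norm_sub_le _ _).trans (by linarith [hR i, hR j])
  have hyp : ‖y - x (k + 2)‖ ≤ δ * (2 * R) := by
    rw [norm_sub_rev]
    exact hy.trans (mul_le_mul_of_nonneg_left (hdiff _ _) hδ)
  have hfy : ‖f' y‖ ≤ ‖f' 0‖ + Lf * (R + δ * (2 * R)) := by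
    have hyR : ‖y‖ ≤ R + δ * (2 * R) := by
      linarith [norm_le_norm_add_norm_sub' y (x (k + 2)), hR (k + 2)]
    have hlip := hflip y 0
    rw [sub_zero] at hlip
    linarith [norm_le_norm_add_norm_sub' (f' y) (f' 0), mul_le_mul_of_nonneg_left hyR hLf.le]
  have hv : ‖v‖ ≤ Lf / 2 * (δ * (2 * R)) + lam * (2 * R) + Cη +
      (‖f' 0‖ + Lf * (R + δ * (2 * R))) := by
    refine (norm_sub_le _ _).trans (add_le_add ((norm_add₃_le ..).trans ?_) hfy)
    rw [norm_smul, norm_smul, Real.norm_of_nonneg (by positivity), Real.norm_of_nonneg hlam.le]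
    gcongr
    · exact hdiff _ _
    · exact hCη _ (mem_closedBall_zero_iff.2 (hR _)) _ hη
  have hcs := real_inner_le_norm v (x (k + 2) - z)
  rw [← neg_sub (x (k + 2)) z, inner_neg_right] at hopt
  linarith [mul_le_mul_of_nonneg_right hv (norm_nonneg (x (k + 2) - z))]

lemma IsCDCA.descent (hx : IsCDCA f' h P lam mu δ x) (hLf : 0 < Lf) (hfconv : ConvexOn ℝ univ f)
    (hfgrad : ∀ z, HasGradientAt f (f' z) z) (hflip : ∀ z w, ‖f' z - f' w‖ ≤ Lf * ‖z - w‖)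
    (hg : ProperE g) (hgconv : ConvexEReal g) (hP : IsProx g P) (hlam : 0 < lam)
    (hμ : 0 < mu) (hmu : mu = 2 / (2 * lam + Lf)) (htau : tau = Lf ^ 2 * δ ^ 2 / (8 * lam))
    (hx0 : g (x 1) ≠ ⊤) (k : ℕ) :
    f (x (k + 2)) - h (x (k + 2)) + (g (x (k + 2))).toReal + lam / 2 * ‖x (k + 2) - x (k + 1)‖ ^ 2
      ≤ f (x (k + 1)) - h (x (k + 1)) + (g (x (k + 1))).toReal + tau * ‖x (k + 1) - x k‖ ^ 2 := by
  obtain ⟨η, hη, y, hxy, hy⟩ := hx k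
  rw [norm_sub_rev (x (k + 1))]
  exact cdca_step_descent hLf hfconv hfgrad hflip hg hgconv hP hlam hμ hmu htau hη hxy hy
    (hx.ne_top hg hP hμ hx0 k)

lemma IsCDCA.exists_tendsto (hx : IsCDCA f' h P lam mu δ x) (hLf : 0 < Lf)
    (hfconv : ConvexOn ℝ univ f) (hfgrad : ∀ z, HasGradientAt f (f' z) z)
    (hflip : ∀ z w, ‖f' z - f' w‖ ≤ Lf * ‖z - w‖) (hg : ProperE g) (hgconv : ConvexEReal g)
    (hglsc : LowerSemicontinuous g) (hh : Continuous h) (hP : IsProx g P) (hlam : 0 < lam)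
    (hμ : 0 < mu) (hmu : mu = 2 / (2 * lam + Lf)) (htau : tau = Lf ^ 2 * δ ^ 2 / (8 * lam))
    (hτ : tau < lam / 2) (hx0 : g (x 1) ≠ ⊤)
    (hlevel : ∀ r : ℝ, Bornology.IsBounded {z | ((f z - h z : ℝ) : EReal) + g z ≤ r}) :
    ∃ R L : ℝ, (∀ m, ‖x m‖ ≤ R) ∧
      Tendsto (fun m => f (x m) - h (x m) + (g (x m)).toReal) atTop (𝓝 L) ∧
      Tendsto (fun k => f (x (k + 1)) - h (x (k + 1)) + (g (x (k + 1))).toReal +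
        tau * ‖x (k + 1) - x k‖ ^ 2) atTop (𝓝 L) := by
  set a := fun k => f (x (k + 1)) - h (x (k + 1)) + (g (x (k + 1))).toReal
  set d := fun k => ‖x (k + 1) - x k‖
  have hcoe : ∀ k, ((f (x (k + 1)) - h (x (k + 1)) : ℝ) : EReal) + g (x (k + 1)) = a k :=
    fun k => coe_add_eq_coe_add_toReal _ (hx.ne_top hg hP hμ hx0 k) (hg.1 _)
  have hdesc : ∀ k, a (k + 1) + lam / 2 * d (k + 1) ^ 2 ≤ a k + tau * d k ^ 2 :=
    hx.descent hLf hfconv hfgrad hflip hg hgconv hP hlam hμ hmu htau hx0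
  have htau0 : 0 ≤ tau := by rw [htau]; positivity
  obtain ⟨R, hR⟩ := exists_forall_norm_le_of_succ_mem (u := x) (hlevel (a 0 + tau * d 0 ^ 2))
    fun k => (hcoe k).trans_le <| EReal.coe_le_coe_iff.2 <|
      (le_add_of_nonneg_right (by positivity)).trans
        (antitone_add_mul_sq_of_descent hτ.le hdesc (Nat.zero_le k))
  have hfc : Continuous f := Differentiable.continuous fun z => (hfgrad z).differentiableAt
  obtain ⟨b, hb⟩ := (isCompact_closedBall (0 : Euc n) R).exists_coe_le_of_lowerSemicontinuous
    (lowerSemicontinuous_coe_add (φ := fun z => f z - h z) (hfc.sub hh) hglsc)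
    fun z => EReal.add_ne_bot_iff.2 ⟨EReal.coe_ne_bot _, hg.1 z⟩
  have hbdd : BddBelow (range a) := ⟨b, by
    rintro _ ⟨k, rfl⟩
    have := hb _ (mem_closedBall_zero_iff.2 (hR (k + 1)))
    rwa [hcoe k, EReal.coe_le_coe_iff] at this⟩
  obtain ⟨L, he, ha⟩ := exists_tendsto_of_descent htau0 hτ hdesc hbdd
  exact ⟨R, L, hR, (tendsto_add_atTop_iff_nat 1).1 ha, he⟩

lemma IsCDCA.coe_add_eq_of_tendsto_subseq (hx : IsCDCA f' h P lam mu δ x) (hLf : 0 < Lf)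
    (hfgrad : ∀ z, HasGradientAt f (f' z) z) (hflip : ∀ z w, ‖f' z - f' w‖ ≤ Lf * ‖z - w‖)
    (hg : ProperE g) (hgconv : ConvexEReal g) (hglsc : LowerSemicontinuous g) (hh : Continuous h)
    (hP : IsProx g P) (hlam : 0 < lam) (hμ : 0 < mu) (hmu : mu = 2 / (2 * lam + Lf))
    (hδ : 0 ≤ δ) (hx0 : g (x 1) ≠ ⊤) {R L : ℝ} (hR : ∀ m, ‖x m‖ ≤ R)
    (hΦ : Tendsto (fun m => f (x m) - h (x m) + (g (x m)).toReal) atTop (𝓝 L)) {xhat : Euc n}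
    {φ : ℕ → ℕ} (hφ : StrictMono φ) (hxφ : Tendsto (fun l => x (φ l)) atTop (𝓝 xhat)) :
    ((f xhat - h xhat : ℝ) : EReal) + g xhat = L := by
  have hfc : Continuous f := Differentiable.continuous fun z => (hfgrad z).differentiableAt
  have hΦφ := hΦ.comp hφ.tendsto_atTop
  have hFφ : Tendsto (fun l => ((f (x (φ l)) - h (x (φ l)) : ℝ) : EReal) + g (x (φ l))) atTop
      (𝓝 L) := by
    refine ((continuous_coe_real_ereal.tendsto L).comp hΦφ).congr' ?_
    filter_upwards [hφ.tendsto_atTop.eventually_ge_atTop 1] with l hl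
    obtain ⟨k, hk⟩ := Nat.exists_eq_add_of_le' hl
    rw [Function.comp_apply, Function.comp_apply, hk,
      coe_add_eq_coe_add_toReal _ (hx.ne_top hg hP hμ hx0 k) (hg.1 _)]
  have hle := LowerSemicontinuousAt.le_of_tendsto
    (lowerSemicontinuous_coe_add (φ := fun z => f z - h z) (hfc.sub hh) hglsc xhat) hxφ hFφ
  have hxhat : g xhat ≠ ⊤ := by
    rintro htop
    rw [htop, EReal.coe_add_top] at hle
    exact (EReal.coe_lt_top L).not_ge hle
  obtain ⟨C, hC⟩ := hx.exists_toReal_le hLf hflip hg hgconv hP hh hlam hμ hmu hδ hR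
  have hge := le_of_toReal_le_add_mul_norm (φ := fun z => f z - h z) (hfc.sub hh).continuousAt
    hxφ hΦφ ((hφ.tendsto_atTop.eventually_ge_atTop 2).mono fun l hl => hC _ hl xhat hxhat)
  rw [coe_add_eq_coe_add_toReal _ hxhat (hg.1 _)] at hle ⊢
  exact le_antisymm hle (EReal.coe_le_coe_iff.2 hge)

end CDCA

/-- For a cDCA sequence with `x⁰ ∈ dom g` and `F = f + g - h`
level-bounded, `lim F(xᵏ)` and `lim E(xᵏ, x^{k-1})` exist, are equal, and for every
accumulation point `x̂` of `(xᵏ)` both equal `F(x̂)`.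
(Here `x 0 = x⁻¹`, `x (k+1) = xᵏ`, and `E(a, b) = F(a) + τ‖a - b‖²`.) -/
theorem stmt9 {n : ℕ}
    (f : Euc n → ℝ) (f' : Euc n → Euc n) (Lf : ℝ) (hLf : 0 < Lf)
    (hfconv : ConvexOn ℝ Set.univ f)
    (hfgrad : ∀ z, HasGradientAt f (f' z) z)
    (hflip : ∀ z w, ‖f' z - f' w‖ ≤ Lf * ‖z - w‖)
    (g : Euc n → EReal) (hgproper : ProperE g) (hgconv : ConvexEReal g)
    (hglsc : LowerSemicontinuous g)
    (h : Euc n → ℝ) (hhconv : ConvexOn ℝ Set.univ h)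
    (F : Euc n → EReal) (hF : ∀ z, F z = ((f z - h z : ℝ) : EReal) + g z)
    (P : ℝ → Euc n → Euc n) (hP : IsProx g P)
    (lam δ mu tau : ℝ) (hlam : 0 < lam) (hδ : δ ∈ Set.Ioo 0 (2*lam/Lf))
    (hmu : mu = 2/(2*lam + Lf)) (htau : tau = Lf^2 * δ^2 / (8*lam))
    (EE : Euc n → Euc n → EReal) (hEE : ∀ a b, EE a b = F a + ((tau * ‖a - b‖^2 : ℝ) : EReal))
    (x : ℕ → Euc n) (hx : IsCDCA f' h P lam mu δ x) (hx0 : g (x 1) ≠ ⊤)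
    (hlevel : ∀ r : ℝ, Bornology.IsBounded {z : Euc n | F z ≤ (r : EReal)}) :
    ∃ L : EReal,
      Tendsto (fun k : ℕ => F (x (k+1))) atTop (nhds L) ∧
      Tendsto (fun k : ℕ => EE (x (k+1)) (x k)) atTop (nhds L) ∧
      ∀ (xhat : Euc n) (φ : ℕ → ℕ), StrictMono φ →
        Tendsto (fun l : ℕ => x (φ l)) atTop (nhds xhat) → F xhat = L := by
  obtain rfl : F = _ := funext hF
  obtain rfl : EE = _ := funext fun a => funext (hEE a)
  have hμ : 0 < mu := hmu ▸ by positivity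
  have hτ : tau < lam / 2 := by
    have : δ * Lf < 2 * lam := (lt_div_iff₀ hLf).1 hδ.2
    rw [htau, div_lt_iff₀ (by positivity)]
    nlinarith [mul_pos hδ.1 hLf]
  have hh : Continuous h := continuousOn_univ.1 (hhconv.continuousOn isOpen_univ)
  obtain ⟨R, L, hR, hΦ, hE⟩ := hx.exists_tendsto hLf hfconv hfgrad hflip hgproper hgconv hglsc hh
    hP hlam hμ hmu htau hτ hx0 hlevel
  have hcoe : ∀ k, ((f (x (k + 1)) - h (x (k + 1)) : ℝ) : EReal) + g (x (k + 1)) =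
      ((f (x (k + 1)) - h (x (k + 1)) + (g (x (k + 1))).toReal : ℝ) : EReal) := fun k =>
    coe_add_eq_coe_add_toReal _ (hx.ne_top hgproper hP hμ hx0 k) (hgproper.1 _)
  refine ⟨L, ?_, ?_, fun xhat φ hφ hxφ => hx.coe_add_eq_of_tendsto_subseq hLf hfgrad hflip
    hgproper hgconv hglsc hh hP hlam hμ hmu hδ.1.le hx0 hR hΦ hφ hxφ⟩
  · simpa only [hcoe, Function.comp_def] using
      (continuous_coe_real_ereal.tendsto L).comp (hΦ.comp (tendsto_add_atTop_nat 1))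
  · simpa only [hcoe, ← EReal.coe_add, Function.comp_def] using
      (continuous_coe_real_ereal.tendsto L).comp hE
end
end
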